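/- Let E be a group, G a normal subgroup of E, H an almost normal subgroup of G, and σ : E/G → E a cross-section of the quotient map consistent with the Hecke pair (G,H). Then for all β, γ ∈ E/G, the assignment g ↦ σ(γ)σ(β)⁻¹ g σ(γβ⁻¹)⁻¹ sends elements of G to elements of G and induces a well-defined bijection of the set G/H of left cosets of H in G onto itself. -/

import Mathlib

noncomputable section

namespace HeckeRDPaper

/-- The conjugate subgroup `gHg⁻¹`. -/
def conjS {G : Type*} [Group G] (g : G) (H : Subgroup G) : Subgroup G :=
  Subgroup.map (MulAut.conj g).toMonoidHom H

/-- `H` is an almost normal subgroup of `G`: the index `|H : H ∩ gHg⁻¹|` is finite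
for every `g ∈ G`. -/
def AlmostNormal {G : Type*} [Group G] (H : Subgroup G) : Prop :=
  ∀ g : G, (conjS g H).relIndex H ≠ 0

/-- `H` and `K` are strongly commensurable: `H ∩ K` has finite index in both `H` and `K`. -/
def StronglyCommensurable {G : Type*} [Group G] (H K : Subgroup G) : Prop :=
  (H ⊓ K).relIndex H ≠ 0 ∧ (H ⊓ K).relIndex K ≠ 0

/-- `H` and `K` are commensurable: `H` and `gKg⁻¹` are strongly commensurable
for some `g ∈ G`. -/
def Commens {G : Type*} [Group G] (H K : Subgroup G) : Prop :=
  ∃ g : G, StronglyCommensurable H (conjS g K)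

/-- A length function on a group `G`. -/
structure IsLengthFunction {G : Type*} [Group G] (L : G → ℝ) : Prop where
  nonneg : ∀ g, 0 ≤ L g
  map_one : L 1 = 0
  map_inv : ∀ g, L g⁻¹ = L g
  subadd : ∀ g h, L (g * h) ≤ L g + L h

/-- A length function on the Hecke pair `(G, H)`: a length function on `G`
vanishing on `H`. -/
def IsHeckeLength {G : Type*} [Group G] (H : Subgroup G) (L : G → ℝ) : Prop :=
  IsLengthFunction L ∧ ∀ h ∈ H, L h = 0

/-- `L₁` dominates `L₂` if `L₂ ≤ a L₁ + b` for some positive constants `a`, `b`. -/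
def Dominates {G : Type*} [Group G] (L₁ L₂ : G → ℝ) : Prop :=
  ∃ a b : ℝ, 0 < a ∧ 0 < b ∧ ∀ g, L₂ g ≤ a * L₁ g + b

/-- Two length functions are equivalent if they dominate each other. -/
def EquivLen {G : Type*} [Group G] (L₁ L₂ : G → ℝ) : Prop :=
  Dominates L₁ L₂ ∧ Dominates L₂ L₁

/-- The set `H\G` of right cosets of `H` in `G`. -/
abbrev RCos {G : Type*} [Group G] (H : Subgroup G) := Quotient (QuotientGroup.rightRel H)

/-- The `ℓ²`-norm over the right cosets `H\G` of a (left `H`-invariant) function on `G`,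
computed using the set of representatives given by `Quotient.out`. -/
def l2 {G : Type*} [Group G] (H : Subgroup G) (f : G → ℝ) : ℝ :=
  Real.sqrt (∑' x : RCos H, f x.out ^ 2)

/-- The convolution `(f∗k)(g) = Σ_{x ∈ ⟨H\G⟩} f(gx⁻¹) k(x)`, the sum being over the
set of representatives of the right cosets of `H` given by `Quotient.out`. -/
def conv {G : Type*} [Group G] (H : Subgroup G) (f k : G → ℝ) : G → ℝ :=
  fun g => ∑' x : RCos H, f (g * x.out⁻¹) * k x.out

/-- `f` is supported on finitely many double cosets of `H`. -/
def FinDosetSupp {G : Type*} [Group G] (H : Subgroup G) (f : G → ℝ) : Prop :=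
  {s : Set G | ∃ g : G, f g ≠ 0 ∧
    s = {y : G | ∃ h₁ ∈ H, ∃ h₂ ∈ H, y = h₁ * g * h₂}}.Finite

/-- The Hecke pair `(G, H)` has property (RD) with respect to the length function `L`:
there is a polynomial `P` such that `‖f∗k‖₂ ≤ P(r) ‖f‖₂ ‖k‖₂` for every `r > 0`,
every nonnegative `H`-bi-invariant `f` supported on finitely many double cosets and
with `L ≤ r` on its support, and every nonnegative left-`H`-invariant square-summable `k`. -/
def HeckeRDwrt {G : Type*} [Group G] (H : Subgroup G) (L : G → ℝ) : Prop :=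
  ∃ P : Polynomial ℝ, ∀ r : ℝ, 0 < r → ∀ f k : G → ℝ,
    (∀ g, 0 ≤ f g) →
    (∀ g : G, ∀ h₁ ∈ H, ∀ h₂ ∈ H, f (h₁ * g * h₂) = f g) →
    FinDosetSupp H f →
    (∀ g, f g ≠ 0 → L g ≤ r) →
    (∀ g, 0 ≤ k g) →
    (∀ g : G, ∀ h ∈ H, k (h * g) = k g) →
    Summable (fun x : RCos H => k x.out ^ 2) →
    l2 H (conv H f k) ≤ P.eval r * l2 H f * l2 H k

/-- The Hecke pair `(G, H)` has property (RD): it has property (RD) with respect to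
some length function on `(G, H)`. -/
def HeckeRD {G : Type*} [Group G] (H : Subgroup G) : Prop :=
  ∃ L : G → ℝ, IsHeckeLength H L ∧ HeckeRDwrt H L

/-- A group has property (RD) with respect to `L` if the Hecke pair `(Γ, {1})` does. -/
def GroupRDwrt (Γ : Type*) [Group Γ] (L : Γ → ℝ) : Prop :=
  HeckeRDwrt (⊥ : Subgroup Γ) L

/-- A group has property (RD) if the Hecke pair `(Γ, {1})` does. -/
def GroupRD (Γ : Type*) [Group Γ] : Prop :=
  HeckeRD (⊥ : Subgroup Γ)

/-- A set-theoretic cross-section `σ : E/N → E` of the quotient map which is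
consistent with the Hecke pair `(·, H)`, i.e. `π ∘ σ = id`, `σ(1) = 1` and
`σ(x) H σ(x)⁻¹ = H` for all `x ∈ E/N`. -/
def ConsistentSection {E : Type*} [Group E] (N : Subgroup E) [N.Normal] (H : Subgroup E)
    (σ : E ⧸ N → E) : Prop :=
  (∀ x : E ⧸ N, (QuotientGroup.mk (σ x) : E ⧸ N) = x) ∧ σ 1 = 1 ∧
    ∀ x : E ⧸ N, ∀ h : E, h ∈ H ↔ σ x * h * (σ x)⁻¹ ∈ H

end HeckeRDPaper

/-! The map is `g ↦ a g c⁻¹` with `a = σ(γ)σ(β)⁻¹` and `c = σ(γβ⁻¹)`. Since `a` and `c` lie in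
the same coset of the normal subgroup `G`, the map preserves `G` and has inverse `g ↦ a⁻¹ g c`;
since `c` normalizes `H`, it carries `g₁⁻¹g₂` to its conjugate `c g₁⁻¹g₂ c⁻¹`, so it respects
left `H`-cosets in both directions. -/

section CrossSection

variable {E : Type*} [Group E]

theorem mul_mul_inv_mem_of_mk_eq {N : Subgroup E} [N.Normal] {a c g : E}
    (hac : (a : E ⧸ N) = c) (hg : g ∈ N) : a * g * c⁻¹ ∈ N := by
  have hconj : a * g * a⁻¹ ∈ N := ‹N.Normal›.conj_mem g hg a
  have hquot : a * c⁻¹ ∈ N := by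
    rw [← QuotientGroup.eq_one_iff, QuotientGroup.mk_mul, QuotientGroup.mk_inv, hac,
      mul_inv_cancel]
  simpa only [mul_assoc, inv_mul_cancel_left] using N.mul_mem hconj hquot

theorem inv_mul_mem_iff_of_mem_normalizer {H : Subgroup E} {c : E}
    (hc : c ∈ Subgroup.normalizer (H : Set E)) (a g₁ g₂ : E) :
    (a * g₁ * c⁻¹)⁻¹ * (a * g₂ * c⁻¹) ∈ H ↔ g₁⁻¹ * g₂ ∈ H := by
  have hconj : (a * g₁ * c⁻¹)⁻¹ * (a * g₂ * c⁻¹) = c * (g₁⁻¹ * g₂) * c⁻¹ := by group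
  rw [hconj, ← Subgroup.mem_normalizer_iff.mp hc]

namespace HeckeRDPaper.ConsistentSection

variable {N H : Subgroup E} [N.Normal] {σ : E ⧸ N → E}

theorem mem_normalizer (hσ : ConsistentSection N H σ) (x : E ⧸ N) :
    σ x ∈ Subgroup.normalizer (H : Set E) :=
  Subgroup.mem_normalizer_iff.mpr (hσ.2.2 x)

theorem mk_mul_inv (hσ : ConsistentSection N H σ) (β γ : E ⧸ N) :
    ((σ γ * (σ β)⁻¹ : E) : E ⧸ N) = σ (γ * β⁻¹) := by
  simp only [QuotientGroup.mk_mul, QuotientGroup.mk_inv, hσ.1]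

end HeckeRDPaper.ConsistentSection

end CrossSection

open HeckeRDPaper in
theorem stmt14_general {E : Type*} [Group E] (G H : Subgroup E) [G.Normal]
    (σ : E ⧸ G → E) (hσ : ConsistentSection G H σ)
    (β γ : E ⧸ G) :
    -- the map sends `G` into `G`
    (∀ g ∈ G, σ γ * (σ β)⁻¹ * g * (σ (γ * β⁻¹))⁻¹ ∈ G) ∧
    -- it is well defined and injective on left cosets of `H` in `G`
    (∀ g₁ ∈ G, ∀ g₂ ∈ G,
      (g₁⁻¹ * g₂ ∈ H ↔
        (σ γ * (σ β)⁻¹ * g₁ * (σ (γ * β⁻¹))⁻¹)⁻¹ *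
          (σ γ * (σ β)⁻¹ * g₂ * (σ (γ * β⁻¹))⁻¹) ∈ H)) ∧
    -- it is surjective on left cosets of `H` in `G`
    (∀ g ∈ G, ∃ g' ∈ G, (σ γ * (σ β)⁻¹ * g' * (σ (γ * β⁻¹))⁻¹)⁻¹ * g ∈ H) := by
  have hac := hσ.mk_mul_inv β γ
  have hac_inv : (((σ γ * (σ β)⁻¹)⁻¹ : E) : E ⧸ G) = (σ (γ * β⁻¹))⁻¹ := by
    rw [QuotientGroup.mk_inv, QuotientGroup.mk_inv, hac]
  refine ⟨fun g hg => mul_mul_inv_mem_of_mk_eq hac hg, fun g₁ _ g₂ _ =>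
    (inv_mul_mem_iff_of_mem_normalizer (hσ.mem_normalizer _) _ _ _).symm, fun g hg => ?_⟩
  refine ⟨(σ γ * (σ β)⁻¹)⁻¹ * g * σ (γ * β⁻¹), ?_, ?_⟩
  · simpa using mul_mul_inv_mem_of_mk_eq hac_inv hg
  · simp [mul_assoc]

open HeckeRDPaper in
/-- For a consistent cross-section, `g ↦ σ(γ)σ(β)⁻¹ g σ(γβ⁻¹)⁻¹` maps `G`
to `G` and induces a well-defined bijection of the set of left cosets of `H` in `G`. -/
theorem stmt14 {E : Type*} [Group E] (G H : Subgroup E) [G.Normal] (hHG : H ≤ G)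
    (hAN : AlmostNormal (H.subgroupOf G))
    (σ : E ⧸ G → E) (hσ : ConsistentSection G H σ)
    (β γ : E ⧸ G) :
    -- the map sends `G` into `G`
    (∀ g ∈ G, σ γ * (σ β)⁻¹ * g * (σ (γ * β⁻¹))⁻¹ ∈ G) ∧
    -- it is well defined and injective on left cosets of `H` in `G`
    (∀ g₁ ∈ G, ∀ g₂ ∈ G,
      (g₁⁻¹ * g₂ ∈ H ↔
        (σ γ * (σ β)⁻¹ * g₁ * (σ (γ * β⁻¹))⁻¹)⁻¹ *
          (σ γ * (σ β)⁻¹ * g₂ * (σ (γ * β⁻¹))⁻¹) ∈ H)) ∧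
    -- it is surjective on left cosets of `H` in `G`
    (∀ g ∈ G, ∃ g' ∈ G, (σ γ * (σ β)⁻¹ * g' * (σ (γ * β⁻¹))⁻¹)⁻¹ * g ∈ H) :=
  stmt14_general G H σ hσ β γ
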